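/- arXiv:2107.06553 — 2 statements merged into one kernel-verified Lean document; each statement's English description precedes it below -/
import Mathlib

section
/- Assume (ε/β)(p+1) ln(N−4) < 1 and ε < N^{−1}. Then there exist N₀ and C depending only on p and β (not on ε) such that for all N ≥ N₀ the eXp mesh is well defined, i.e. 0 = x₀ < x₁ < ⋯ < x_N = 1, and every mesh width satisfies h_j = x_j − x_{j−1} ≤ C N^{−1} for j = 1, …, N. -/
/-!
Away from the uniform middle part, a mesh step is `(ε/β)(p+1)` times the increment of `φ` over
an interval of length `1/N`; by `log x ≤ x - 1` that increment is at most `1`, so graded steps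
are at most `(p+1)/(βN)` since `ε < 1/N`. The middle part is uniform with step
`(1 - 2X)/(N/2 + 2)`, where `X = x_{N/4-1} ≤ (ε/β)(p+1) log(N/(4 C_{p,1}))` because
`C_{p,ε} ≥ C_{p,1}`. Hence `X = O(log N / N)`, so for large `N` we have `0 ≤ X < 1/2` and the
uniform step is positive and at most `2/N`. The right part mirrors the left one.
-/

/-- The constant `C_{p,ε} = 1 − exp(−β/((p+1)ε))`. -/
noncomputable def Cpe (p : ℕ) (β ε : ℝ) : ℝ :=
  1 - Real.exp (-(β / (((p:ℝ) + 1) * ε)))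

/-- The mesh generating function `φ(t) = −ln(1 − 4 C_{p,ε} t)`. -/
noncomputable def phiFun (c : ℝ) : ℝ → ℝ := fun t => -Real.log (1 - 4 * c * t)

/-- The graded nodes `x_j = (ε/β)(p+1)φ(j/N)`. -/
noncomputable def gradedNode (p N : ℕ) (β ε : ℝ) (j : ℕ) : ℝ :=
  (ε / β) * ((p:ℝ) + 1) * phiFun (Cpe p β ε) ((j:ℝ) / (N:ℝ))

/-- The nodes of the exponentially graded (eXp) mesh on `[0,1]`. -/
noncomputable def expNode (p N : ℕ) (β ε : ℝ) (j : ℕ) : ℝ :=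
  if j ≤ N / 4 - 1 then gradedNode p N β ε j
  else if j ≤ 3 * N / 4 then
    gradedNode p N β ε (N / 4 - 1) +
      ((1 - 2 * gradedNode p N β ε (N / 4 - 1)) / ((N:ℝ) / 2 + 2)) *
        ((j:ℝ) - ((N:ℝ) / 4 - 1))
  else 1 - (ε / β) * ((p:ℝ) + 1) * phiFun (Cpe p β ε) (((N - j : ℕ):ℝ) / (N:ℝ))

open Filter Topology

section Phi

variable {c s t : ℝ}

@[simp]
lemma phiFun_zero (c : ℝ) : phiFun c 0 = 0 := by
  simp [phiFun]

lemma phiFun_nonneg (hc : 0 ≤ c) (ht : 0 ≤ t) (hct : 4 * c * t < 1) : 0 ≤ phiFun c t :=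
  neg_nonneg.2 <| Real.log_nonpos (by linarith) (by nlinarith)

lemma phiFun_lt_phiFun (hc : 0 < c) (hst : s < t) (hct : 4 * c * t < 1) :
    phiFun c s < phiFun c t :=
  neg_lt_neg <| Real.log_lt_log (by linarith) (by nlinarith)

lemma phiFun_sub_le (hc : 0 ≤ c) (hst : s ≤ t) (hct : 4 * c * t < 1) :
    phiFun c t - phiFun c s ≤ 4 * c * (t - s) / (1 - 4 * c * t) := by
  have hpos : 0 < 1 - 4 * c * t := by linarith
  have hs : 0 < 1 - 4 * c * s := by nlinarith
  calc phiFun c t - phiFun c s = Real.log ((1 - 4 * c * s) / (1 - 4 * c * t)) := by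
        rw [Real.log_div hs.ne' hpos.ne', phiFun, phiFun]; ring
    _ ≤ (1 - 4 * c * s) / (1 - 4 * c * t) - 1 := Real.log_le_sub_one_of_pos (by positivity)
    _ = 4 * c * (t - s) / (1 - 4 * c * t) := by field_simp; ring

end Phi

section Cpe

variable {p : ℕ} {β ε : ℝ}

lemma Cpe_pos (hβ : 0 < β) (hε : 0 < ε) : 0 < Cpe p β ε := by
  rw [Cpe, sub_pos, Real.exp_lt_one_iff, neg_lt_zero]
  positivity

lemma Cpe_lt_one : Cpe p β ε < 1 := by
  rw [Cpe]
  linarith [Real.exp_pos (-(β / (((p:ℝ) + 1) * ε)))]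

lemma Cpe_one_le (hβ : 0 < β) (hε : 0 < ε) (hε1 : ε ≤ 1) : Cpe p β 1 ≤ Cpe p β ε := by
  rw [Cpe, Cpe, sub_le_sub_iff_left, Real.exp_le_exp, neg_le_neg_iff]
  gcongr

end Cpe

section Graded

variable {p N : ℕ} {β ε : ℝ} {k : ℕ}

@[simp]
lemma gradedNode_zero : gradedNode p N β ε 0 = 0 := by
  simp [gradedNode]

lemma four_mul_Cpe_mul_div_lt_one (hk : 4 * (k + 1) ≤ N) :
    4 * Cpe p β ε * ((k + 1 : ℕ) / N : ℝ) < 1 := by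
  have hN : (0 : ℝ) < N := by exact_mod_cast (by omega : 0 < N)
  have hkN : (4 * (k + 1) : ℝ) ≤ N := by exact_mod_cast hk
  rw [mul_div_assoc', div_lt_one hN]
  push_cast
  nlinarith [Cpe_lt_one (p := p) (β := β) (ε := ε)]

lemma gradedNode_nonneg (hβ : 0 < β) (hε : 0 < ε) (hk : 4 * (k + 1) ≤ N) :
    0 ≤ gradedNode p N β ε k := by
  have hC := (Cpe_pos (p := p) hβ hε).le
  refine mul_nonneg (by positivity) (phiFun_nonneg hC (by positivity) ?_)
  refine lt_of_le_of_lt ?_ (four_mul_Cpe_mul_div_lt_one (p := p) (β := β) (ε := ε) hk)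
  gcongr
  linarith

lemma gradedNode_lt_succ (hβ : 0 < β) (hε : 0 < ε) (hk : 4 * (k + 1) ≤ N) :
    gradedNode p N β ε k < gradedNode p N β ε (k + 1) := by
  have hN : (0 : ℝ) < N := by exact_mod_cast (by omega : 0 < N)
  refine mul_lt_mul_of_pos_left (phiFun_lt_phiFun (Cpe_pos hβ hε) ?_
    (four_mul_Cpe_mul_div_lt_one hk)) (by positivity)
  gcongr
  linarith

/-- The increment of `φ` over `1/N` is at most `1` as long as `1 - 4 C t` stays above `4 C / N`. -/
lemma gradedNode_succ_sub_le (hβ : 0 < β) (hε : 0 < ε) (hk : 4 * (k + 2) ≤ N) :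
    gradedNode p N β ε (k + 1) - gradedNode p N β ε k ≤ ε / β * (p + 1) := by
  set C := Cpe p β ε
  have hC : 0 < C := Cpe_pos hβ hε
  have hC1 : C < 1 := Cpe_lt_one
  have hN : (0 : ℝ) < N := by exact_mod_cast (by omega : 0 < N)
  have hkN : (4 * (k + 2) : ℝ) ≤ N := by exact_mod_cast hk
  have hct := four_mul_Cpe_mul_div_lt_one (p := p) (β := β) (ε := ε) (k := k) (N := N) (by omega)
  have hstep : phiFun C ((k + 1 : ℕ) / N) - phiFun C (k / N) ≤ 1 := by
    refine (phiFun_sub_le hC.le (by gcongr; simp) hct).trans ?_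
    rw [div_le_one (by linarith)]
    push_cast
    field_simp
    nlinarith
  calc gradedNode p N β ε (k + 1) - gradedNode p N β ε k
      = ε / β * (p + 1) * (phiFun C ((k + 1 : ℕ) / N) - phiFun C (k / N)) := by
        simp only [gradedNode, C]; ring
    _ ≤ ε / β * (p + 1) * 1 := by gcongr
    _ = ε / β * (p + 1) := mul_one _

lemma gradedNode_pred_le (hβ : 0 < β) (hε : 0 < ε) {m : ℕ} (hm : 1 ≤ m) :
    gradedNode p (4 * m) β ε (m - 1) ≤ ε / β * (p + 1) * Real.log (m / Cpe p β ε) := by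
  set C := Cpe p β ε
  have hC : 0 < C := Cpe_pos hβ hε
  have hm' : (1 : ℝ) ≤ m := by exact_mod_cast hm
  have hrest : 1 - 4 * C * (((m - 1 : ℕ) : ℝ) / ((4 * m : ℕ) : ℝ)) = 1 - C + C / m := by
    rw [Nat.cast_sub hm]; push_cast; field_simp; ring
  have hlow : C / m ≤ 1 - C + C / m := by linarith [Cpe_lt_one (p := p) (β := β) (ε := ε)]
  refine mul_le_mul_of_nonneg_left ?_ (by positivity)
  rw [phiFun, hrest, ← Real.log_inv, inv_eq_one_div]
  have hlow_pos : 0 < C / m := by positivity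
  refine Real.log_le_log (one_div_pos.2 (hlow_pos.trans_le hlow)) ?_
  simpa only [one_div_div] using one_div_le_one_div_of_le hlow_pos hlow

end Graded

section Mesh

variable {p m : ℕ} {β ε : ℝ} {j : ℕ}

@[simp]
lemma expNode_zero {N : ℕ} : expNode p N β ε 0 = 0 := by
  simp [expNode]

lemma expNode_of_lt (hj : j + 1 ≤ m) :
    expNode p (4 * m) β ε j = gradedNode p (4 * m) β ε j := by
  rw [expNode, if_pos (by omega)]

lemma expNode_of_gt (hj : 3 * m < j) :
    expNode p (4 * m) β ε j = 1 - gradedNode p (4 * m) β ε (4 * m - j) := by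
  rw [expNode, if_neg (by omega), if_neg (by omega), gradedNode]

/-- The uniform middle part, extended by one node at each end; at `j = 3m + 1` this uses
that the `2m + 2` middle steps fill `[X, 1 - X]`. -/
lemma expNode_eq_linear (hm : 1 ≤ m) (hj₁ : m ≤ j + 1) (hj₂ : j ≤ 3 * m + 1) :
    expNode p (4 * m) β ε j = gradedNode p (4 * m) β ε (m - 1) +
      (1 - 2 * gradedNode p (4 * m) β ε (m - 1)) / (2 * m + 2) * (j + 1 - m) := by
  set X := gradedNode p (4 * m) β ε (m - 1)
  have hm' : (2 * m + 2 : ℝ) ≠ 0 := by positivity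
  rcases (by omega : j = m - 1 ∨ (m ≤ j ∧ j ≤ 3 * m) ∨ j = 3 * m + 1) with rfl | ⟨h₁, h₂⟩ | rfl
  · rw [expNode_of_lt (by omega), Nat.cast_sub hm]
    simp [X]
  · rw [expNode, if_neg (by omega), if_pos (by omega), (by omega : 4 * m / 4 - 1 = m - 1)]
    push_cast
    ring
  · rw [expNode_of_gt (by omega), (by omega : 4 * m - (3 * m + 1) = m - 1)]
    push_cast
    field_simp
    ring

lemma expNode_succ_sub_of_mid (hm : 1 ≤ m) (hj₁ : m ≤ j + 1) (hj₂ : j ≤ 3 * m) :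
    expNode p (4 * m) β ε (j + 1) - expNode p (4 * m) β ε j =
      (1 - 2 * gradedNode p (4 * m) β ε (m - 1)) / (2 * m + 2) := by
  rw [expNode_eq_linear hm (by omega) (by omega), expNode_eq_linear hm hj₁ (by omega)]
  push_cast
  ring

lemma expNode_four_mul (hm : 1 ≤ m) : expNode p (4 * m) β ε (4 * m) = 1 := by
  simp [expNode_of_gt (by omega : 3 * m < 4 * m)]

lemma expNode_succ_sub_mem (hβ : 0 < β) (hε : 0 < ε) (hm : 1 ≤ m)
    (hX : 2 * gradedNode p (4 * m) β ε (m - 1) < 1) (hj : j < 4 * m) :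
    0 < expNode p (4 * m) β ε (j + 1) - expNode p (4 * m) β ε j ∧
      expNode p (4 * m) β ε (j + 1) - expNode p (4 * m) β ε j ≤
        max (ε / β * (p + 1)) (1 / (2 * m + 2)) := by
  rcases (by omega : j + 2 ≤ m ∨ (m ≤ j + 1 ∧ j ≤ 3 * m) ∨ 3 * m < j) with
    hleft | ⟨hj₁, hj₂⟩ | hright
  · rw [expNode_of_lt (by omega), expNode_of_lt (by omega)]
    exact ⟨sub_pos.2 (gradedNode_lt_succ hβ hε (by omega)),
      (gradedNode_succ_sub_le hβ hε (by omega)).trans (le_max_left _ _)⟩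
  · have hX₀ := gradedNode_nonneg (p := p) hβ hε (k := m - 1) (N := 4 * m) (by omega)
    rw [expNode_succ_sub_of_mid hm hj₁ hj₂]
    refine ⟨by positivity, le_max_of_le_right ?_⟩
    gcongr
    linarith
  · obtain ⟨k, hk, hkj⟩ : ∃ k, 4 * m - j = k + 1 ∧ 4 * m - (j + 1) = k := ⟨4 * m - (j + 1), by omega⟩
    rw [expNode_of_gt (by omega), expNode_of_gt hright, hk, hkj, sub_sub_sub_cancel_left]
    exact ⟨sub_pos.2 (gradedNode_lt_succ hβ hε (by omega)),
      (gradedNode_succ_sub_le hβ hε (by omega)).trans (le_max_left _ _)⟩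

lemma two_mul_gradedNode_pred_lt (hβ : 0 < β) (hε : 0 < ε) (hε₁ : ε ≤ 1) (hm : 1 ≤ m)
    (hεm : ε < (4 * m : ℝ)⁻¹)
    (hsmall : (p + 1) / β * ((Real.log m - Real.log (Cpe p β 1)) / m) < 2) :
    2 * gradedNode p (4 * m) β ε (m - 1) < 1 := by
  have hm' : (1 : ℝ) ≤ m := by exact_mod_cast hm
  have hC₁ : 0 < Cpe p β 1 := Cpe_pos hβ one_pos
  have hlog : Real.log (m / Cpe p β ε) ≤ Real.log m - Real.log (Cpe p β 1) := by
    rw [Real.log_div (by positivity) (Cpe_pos hβ hε).ne']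
    gcongr
    exact Cpe_one_le hβ hε hε₁
  have hlog₀ : 0 ≤ Real.log m - Real.log (Cpe p β 1) := by
    linarith [Real.log_nonneg hm', Real.log_nonpos hC₁.le Cpe_lt_one.le]
  calc 2 * gradedNode p (4 * m) β ε (m - 1)
      ≤ 2 * (ε / β * (p + 1) * (Real.log m - Real.log (Cpe p β 1))) := by
        gcongr
        exact (gradedNode_pred_le hβ hε hm).trans (by gcongr)
    _ ≤ 2 * ((4 * m : ℝ)⁻¹ / β * (p + 1) * (Real.log m - Real.log (Cpe p β 1))) := by
        gcongr
    _ = (p + 1) / β * ((Real.log m - Real.log (Cpe p β 1)) / m) / 2 := by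
        field_simp
        ring
    _ < 1 := by linarith

end Mesh

lemma tendsto_log_sub_const_div_natCast (B : ℝ) :
    Tendsto (fun n : ℕ => (Real.log n - B) / n) atTop (𝓝 0) := by
  have hlog : Tendsto (fun x : ℝ => Real.log x / x) atTop (𝓝 0) := by
    simpa using Real.tendsto_pow_log_div_mul_add_atTop 1 0 1 one_ne_zero
  have hconst : Tendsto (fun x : ℝ => B / x) atTop (𝓝 0) :=
    tendsto_const_nhds.div_atTop tendsto_id
  simpa [sub_div, Function.comp_def] using (hlog.sub hconst).comp tendsto_natCast_atTop_atTop

theorem stmt_4_general (p : ℕ) (β : ℝ) (hβ : 0 < β) :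
    ∃ (N₀ : ℕ) (C : ℝ), 0 < C ∧
      ∀ (ε : ℝ) (N : ℕ), ε ∈ Set.Ioc (0:ℝ) 1 → N₀ ≤ N → 8 ≤ N → 4 ∣ N →
        (ε / β) * ((p:ℝ) + 1) * Real.log ((N:ℝ) - 4) < 1 → ε < (N:ℝ)⁻¹ →
        (expNode p N β ε 0 = 0 ∧
          (∀ j < N, expNode p N β ε j < expNode p N β ε (j + 1)) ∧
          expNode p N β ε N = 1) ∧
        ∀ j : ℕ, 1 ≤ j → j ≤ N →
          expNode p N β ε j - expNode p N β ε (j - 1) ≤ C * (N:ℝ)⁻¹ := by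
  obtain ⟨m₀, hm₀⟩ := eventually_atTop.1 <|
    ((tendsto_log_sub_const_div_natCast (Real.log (Cpe p β 1))).const_mul
      ((p + 1) / β)).eventually_lt_const (by rw [mul_zero]; exact two_pos)
  refine ⟨4 * (m₀ + 1), (p + 1) / β + 2, by positivity, ?_⟩
  rintro ε N ⟨hε, hε₁⟩ hN - ⟨m, rfl⟩ - hεN
  have hm : 1 ≤ m := by omega
  have hm' : (1 : ℝ) ≤ m := by exact_mod_cast hm
  push_cast at hεN ⊢
  have hX := two_mul_gradedNode_pred_lt hβ hε hε₁ hm hεN (hm₀ m (by omega))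
  have hgraded : ε / β * (p + 1) ≤ (p + 1) / β * (4 * m : ℝ)⁻¹ :=
    calc ε / β * (p + 1) = (p + 1) / β * ε := by ring
      _ ≤ (p + 1) / β * (4 * m : ℝ)⁻¹ := by gcongr
  have huniform : 1 / (2 * m + 2 : ℝ) ≤ 2 * (4 * m : ℝ)⁻¹ := by
    field_simp
    linarith
  have hwidth : max (ε / β * (p + 1)) (1 / (2 * m + 2)) ≤ ((p + 1) / β + 2) * (4 * m : ℝ)⁻¹ := by
    have : 0 ≤ (p + 1) / β * (4 * m : ℝ)⁻¹ := by positivity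
    rw [add_mul]
    exact max_le (by linarith) (by linarith)
  have hstep := fun j (hj : j < 4 * m) => expNode_succ_sub_mem hβ hε hm hX hj
  refine ⟨⟨expNode_zero, fun j hj => sub_pos.1 (hstep j hj).1, expNode_four_mul hm⟩,
    fun j hj₁ hj₂ => ?_⟩
  obtain ⟨k, rfl⟩ : ∃ k, j = k + 1 := ⟨j - 1, by omega⟩
  simpa using (hstep k (by omega)).2.trans hwidth

/-- under `(ε/β)(p+1)ln(N−4) < 1` and `ε < N⁻¹`, for all `N ≥ N₀`
(`N₀`, `C` depending only on `p`, `β`) the eXp mesh is well defined,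
`0 = x₀ < x₁ < ⋯ < x_N = 1`, and every mesh width satisfies `h_j ≤ C N⁻¹`. -/
theorem stmt_4 (p : ℕ) (hp : 3 ≤ p) (β : ℝ) (hβ : 0 < β) :
    ∃ (N₀ : ℕ) (C : ℝ), 0 < C ∧
      ∀ (ε : ℝ) (N : ℕ), ε ∈ Set.Ioc (0:ℝ) 1 → N₀ ≤ N → 8 ≤ N → 4 ∣ N →
        (ε / β) * ((p:ℝ) + 1) * Real.log ((N:ℝ) - 4) < 1 → ε < (N:ℝ)⁻¹ →
        (expNode p N β ε 0 = 0 ∧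
          (∀ j < N, expNode p N β ε j < expNode p N β ε (j + 1)) ∧
          expNode p N β ε N = 1) ∧
        ∀ j : ℕ, 1 ≤ j → j ≤ N →
          expNode p N β ε j - expNode p N β ε (j - 1) ≤ C * (N:ℝ)⁻¹ :=
  stmt_4_general p β hβ
end

section
/- If moreover ‖u‖ = ‖u_k^h‖ = 1 and ⟨Πu, u_k^h⟩ ≥ 0, then ‖u − u_k^h‖ ≤ 2(1 + ρ)‖u − Πu‖, where ρ = max_{j ≠ k} |λ| / |λ − λ_j^h|. -/
/-!
Expanding `Πu` in the discrete eigenbasis, the Galerkin and Ritz equations give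
`(λ_j^h - λ) ⟪u_j^h, Πu⟫ = λ ⟪u_j^h, u - Πu⟫`, so by Bessel's inequality the component of `Πu`
orthogonal to `u_k^h` has norm at most `ρ ‖u - Πu‖`. Hence `u` lies within `(1 + ρ) ‖u - Πu‖` of
the nonnegative multiple `⟪u_k^h, Πu⟫ u_k^h`, and for unit vectors passing from a nonnegative
multiple of `u_k^h` to `u_k^h` itself at most doubles the distance.
-/

open scoped RealInnerProductSpace

open Finset

section Orthonormal

variable {𝕜 E ι : Type*} [RCLike 𝕜] [NormedAddCommGroup E] [InnerProductSpace 𝕜 E] {v : ι → E}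

local notation "⟪" x ", " y "⟫" => inner 𝕜 x y

theorem Orthonormal.eq_sum_inner_smul_of_mem_span [Fintype ι] (hv : Orthonormal 𝕜 v) {x : E}
    (hx : x ∈ Submodule.span 𝕜 (Set.range v)) : x = ∑ i, ⟪v i, x⟫ • v i := by
  obtain ⟨c, rfl⟩ := (Submodule.mem_span_range_iff_exists_fun 𝕜).1 hx
  simp_rw [hv.inner_right_fintype]

theorem Orthonormal.norm_sum_smul_le (hv : Orthonormal 𝕜 v) (s : Finset ι) {c : ι → 𝕜}
    {ρ : ℝ} (hρ : 0 ≤ ρ) (y : E) (hc : ∀ i ∈ s, ‖c i‖ ≤ ρ * ‖⟪v i, y⟫‖) :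
    ‖∑ i ∈ s, c i • v i‖ ≤ ρ * ‖y‖ := by
  have hsq : ‖∑ i ∈ s, c i • v i‖ ^ 2 = ∑ i ∈ s, ‖c i‖ ^ 2 := by
    rw [← RCLike.ofReal_inj (K := 𝕜), RCLike.ofReal_pow, ← inner_self_eq_norm_sq_to_K,
      hv.inner_sum]
    push_cast
    simp_rw [RCLike.conj_mul]
  refine pow_le_pow_iff_left₀ (norm_nonneg _) (by positivity) two_ne_zero |>.1 ?_
  calc ‖∑ i ∈ s, c i • v i‖ ^ 2 = ∑ i ∈ s, ‖c i‖ ^ 2 := hsq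
    _ ≤ ∑ i ∈ s, ρ ^ 2 * ‖⟪v i, y⟫‖ ^ 2 := by
      gcongr with i hi
      rw [← mul_pow]
      exact pow_le_pow_left₀ (norm_nonneg _) (hc i hi) 2
    _ = ρ ^ 2 * ∑ i ∈ s, ‖⟪v i, y⟫‖ ^ 2 := (mul_sum ..).symm
    _ ≤ ρ ^ 2 * ‖y‖ ^ 2 := by gcongr; exact hv.sum_inner_products_le y
    _ = (ρ * ‖y‖) ^ 2 := (mul_pow ..).symm

end Orthonormal

section Ritz

variable {V : Type*} [NormedAddCommGroup V] [InnerProductSpace ℝ V]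

theorem abs_inner_ritz_le (B : V →ₗ[ℝ] V →ₗ[ℝ] ℝ) {u Pu w : V} {lam μ ρ : ℝ}
    (hu : B u w = lam * ⟪u, w⟫) (hPu : B Pu w = μ * ⟪Pu, w⟫) (hritz : B (u - Pu) w = 0)
    (hne : lam ≠ μ) (hρ : |lam| / |lam - μ| ≤ ρ) :
    |⟪w, Pu⟫| ≤ ρ * |⟪w, u - Pu⟫| := by
  have key : (μ - lam) * ⟪w, Pu⟫ = lam * ⟪w, u - Pu⟫ := by
    rw [map_sub, LinearMap.sub_apply, sub_eq_zero, hu, hPu] at hritz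
    rw [inner_sub_right, real_inner_comm u w, real_inner_comm Pu w]
    linarith
  have hpos : 0 < |lam - μ| := abs_pos.2 (sub_ne_zero.2 hne)
  calc |⟪w, Pu⟫| = |lam| / |lam - μ| * |⟪w, u - Pu⟫| := by
        rw [div_mul_eq_mul_div, eq_div_iff hpos.ne', abs_sub_comm, ← abs_mul, ← abs_mul,
          mul_comm, key]
    _ ≤ ρ * |⟪w, u - Pu⟫| := by gcongr

theorem norm_sub_le_two_mul_norm_sub_smul {u e : V} {t : ℝ} (hu : ‖u‖ = 1) (he : ‖e‖ = 1)
    (ht : 0 ≤ t) : ‖u - e‖ ≤ 2 * ‖u - t • e‖ := by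
  have hte : ‖t • e - e‖ ≤ ‖u - t • e‖ :=
    calc ‖t • e - e‖ = ‖(t - 1) • e‖ := by rw [sub_smul, one_smul]
      _ = |‖t • e‖ - ‖u‖| := by
        rw [norm_smul, norm_smul, he, hu, Real.norm_eq_abs, Real.norm_of_nonneg ht, mul_one,
          mul_one]
      _ ≤ ‖t • e - u‖ := abs_norm_sub_norm_le _ _
      _ = ‖u - t • e‖ := norm_sub_rev _ _
  calc ‖u - e‖ ≤ ‖u - t • e‖ + ‖t • e - e‖ := norm_sub_le_norm_sub_add_norm_sub ..
    _ ≤ 2 * ‖u - t • e‖ := by linarith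

end Ritz

theorem stmt_14_general {V : Type*} [NormedAddCommGroup V] [InnerProductSpace ℝ V]
    {n : ℕ} (B : V →ₗ[ℝ] V →ₗ[ℝ] ℝ)
    (W : Submodule ℝ V) (uh : Fin n → V) (lamh : Fin n → ℝ)
    (huhW : ∀ j, uh j ∈ W) (hon : Orthonormal ℝ uh)
    (hspan : Submodule.span ℝ (Set.range uh) = W)
    (heig : ∀ w ∈ W, ∀ j, B w (uh j) = lamh j * ⟪w, uh j⟫)
    (u : V) (lam : ℝ) (hu : ∀ w ∈ W, B u w = lam * ⟪u, w⟫)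
    (Pu : V) (hPu : Pu ∈ W) (hritz : ∀ w ∈ W, B (u - Pu) w = 0)
    (k : Fin n) (hk : ∀ j, j ≠ k → lam ≠ lamh j)
    (ρ : ℝ) (hρ0 : 0 ≤ ρ)
    (hρ : ∀ j, j ≠ k → |lam| / |lam - lamh j| ≤ ρ)
    (hnormu : ‖u‖ = 1) (hnormuh : ‖uh k‖ = 1)
    (hpos : 0 ≤ ⟪Pu, uh k⟫) :
    ‖u - uh k‖ ≤ 2 * (1 + ρ) * ‖u - Pu‖ := by
  have hPu_eq : Pu = ∑ j, ⟪uh j, Pu⟫ • uh j :=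
    hon.eq_sum_inner_smul_of_mem_span (hspan ▸ hPu)
  have hcoeff : ∀ j ∈ univ.erase k, ‖⟪uh j, Pu⟫‖ ≤ ρ * ‖⟪uh j, u - Pu⟫‖ := fun j hj =>
    have hjk := ne_of_mem_erase hj
    abs_inner_ritz_le B (hu _ (huhW j)) (heig Pu hPu j) (hritz _ (huhW j)) (hk j hjk) (hρ j hjk)
  have hoff : ‖Pu - ⟪uh k, Pu⟫ • uh k‖ ≤ ρ * ‖u - Pu‖ := by
    have hsplit : Pu - ⟪uh k, Pu⟫ • uh k = ∑ j ∈ univ.erase k, ⟪uh j, Pu⟫ • uh j := by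
      rw [sum_erase_eq_sub (mem_univ k), ← hPu_eq]
    rw [hsplit]
    exact hon.norm_sum_smul_le _ hρ0 _ hcoeff
  have hnear : ‖u - ⟪uh k, Pu⟫ • uh k‖ ≤ (1 + ρ) * ‖u - Pu‖ :=
    calc ‖u - ⟪uh k, Pu⟫ • uh k‖ ≤ ‖u - Pu‖ + ‖Pu - ⟪uh k, Pu⟫ • uh k‖ :=
          norm_sub_le_norm_sub_add_norm_sub ..
      _ ≤ (1 + ρ) * ‖u - Pu‖ := by linarith
  calc ‖u - uh k‖ ≤ 2 * ‖u - ⟪uh k, Pu⟫ • uh k‖ :=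
        norm_sub_le_two_mul_norm_sub_smul hnormu hnormuh (real_inner_comm Pu (uh k) ▸ hpos)
    _ ≤ 2 * (1 + ρ) * ‖u - Pu‖ := by linarith

/-- in the setting of Statement 12, if moreover
`‖u‖ = ‖u_k^h‖ = 1` and `⟨Πu, u_k^h⟩ ≥ 0`, then
`‖u − u_k^h‖ ≤ 2(1 + ρ)‖u − Πu‖`, where `ρ = max_{j≠k} |λ|/|λ − λ_j^h|`
(formalized as: `ρ ≥ 0` is any upper bound of the quotients). -/
theorem stmt_14 {V : Type*} [NormedAddCommGroup V] [InnerProductSpace ℝ V]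
    {n : ℕ} (B : V →ₗ[ℝ] V →ₗ[ℝ] ℝ)
    (hsymm : ∀ x y : V, B x y = B y x)
    (W : Submodule ℝ V) (uh : Fin n → V) (lamh : Fin n → ℝ)
    (huhW : ∀ j, uh j ∈ W) (hon : Orthonormal ℝ uh)
    (hspan : Submodule.span ℝ (Set.range uh) = W)
    (heig : ∀ w ∈ W, ∀ j, B w (uh j) = lamh j * ⟪w, uh j⟫)
    (u : V) (lam : ℝ) (hu : ∀ w ∈ W, B u w = lam * ⟪u, w⟫)
    (Pu : V) (hPu : Pu ∈ W) (hritz : ∀ w ∈ W, B (u - Pu) w = 0)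
    (k : Fin n) (hk : ∀ j, j ≠ k → lam ≠ lamh j)
    (ρ : ℝ) (hρ0 : 0 ≤ ρ)
    (hρ : ∀ j, j ≠ k → |lam| / |lam - lamh j| ≤ ρ)
    (hnormu : ‖u‖ = 1) (hnormuh : ‖uh k‖ = 1)
    (hpos : 0 ≤ ⟪Pu, uh k⟫) :
    ‖u - uh k‖ ≤ 2 * (1 + ρ) * ‖u - Pu‖ :=
  stmt_14_general B W uh lamh huhW hon hspan heig u lam hu Pu hPu hritz k hk ρ hρ0 hρ hnormu hnormuh
    hpos
end
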